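/- For every integer k ≥ 1 and every vector v = (v₁,v₂) with v₁v₂ > 0 and 7|v₁|/3 ≤ |v₂| ≤ 3|v₁|, the image w = (-1)^k [[2k+1, -2k-2],[-6k-2, 6k+5]] v satisfies w₁w₂ < 0 and 7|w₁|/3 ≤ |w₂| ≤ 3|w₁|. -/

import Mathlib

/-!
Both cones are unions of a sector and its negative, so by homogeneity it suffices to treat
`0 < v₀ ≤ v₁`, and there the sign `(-1)ᵏ` is irrelevant. Writing `w = ±(X, Y)` with
`X = (2k+1)v₀ - (2k+2)v₁` and `Y = (6k+5)v₁ - (6k+2)v₀`, one has `X < 0 < Y` and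
`3|X| - Y = v₁ - v₀` and `3Y - 7|X| = (4k+1)(v₁ - v₀) + 2v₀`.
-/

def coneC₄ : Set (Fin 2 → ℝ) :=
  {w | w 0 * w 1 < 0 ∧ 7 * |w 0| / 3 ≤ |w 1| ∧ |w 1| ≤ 3 * |w 0|}

lemma smul_mem_coneC₄ {c : ℝ} (hc : c ≠ 0) {w : Fin 2 → ℝ} (hw : w ∈ coneC₄) :
    c • w ∈ coneC₄ := by
  obtain ⟨hneg, hlo, hhi⟩ := hw
  have hc' : 0 < |c| := abs_pos.mpr hc
  refine ⟨?_, ?_, ?_⟩ <;> simp only [Pi.smul_apply, smul_eq_mul, abs_mul]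
  · nlinarith [mul_self_pos.mpr hc]
  · nlinarith
  · nlinarith

lemma mem_coneC₄_of_le {s a b : ℝ} (hs : -1 / 4 ≤ s) (ha : 0 < a) (hab : a ≤ b) :
    ![(2 * s + 1) * a - (2 * s + 2) * b, (6 * s + 5) * b - (6 * s + 2) * a] ∈ coneC₄ := by
  have hX : (2 * s + 1) * a - (2 * s + 2) * b < 0 := by nlinarith
  have hY : 0 < (6 * s + 5) * b - (6 * s + 2) * a := by nlinarith
  refine ⟨?_, ?_, ?_⟩ <;>
    simp only [Matrix.cons_val_zero, Matrix.cons_val_one, abs_of_neg hX, abs_of_pos hY]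
  · exact mul_neg_of_neg_of_pos hX hY
  · nlinarith [mul_nonneg (by linarith : 0 ≤ 4 * s + 1) (sub_nonneg.mpr hab)]
  · linarith

lemma exists_eq_mul_abs_of_mul_pos {x y : ℝ} (h : 0 < x * y) :
    ∃ σ : ℝ, σ ≠ 0 ∧ x = σ * |x| ∧ y = σ * |y| := by
  rcases mul_pos_iff.mp h with ⟨hx, hy⟩ | ⟨hx, hy⟩
  · exact ⟨1, one_ne_zero, by simp [abs_of_pos hx], by simp [abs_of_pos hy]⟩
  · exact ⟨-1, by norm_num, by simp [abs_of_neg hx], by simp [abs_of_neg hy]⟩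

theorem stmt6_general (k : ℕ) (v : Fin 2 → ℝ)
    (hv : v 0 * v 1 > 0) (hlo : 7 * |v 0| / 3 ≤ |v 1|) :
    let w := (((-1 : ℝ) ^ k) •
      !![2 * (k : ℝ) + 1, -2 * (k : ℝ) - 2;
         -6 * (k : ℝ) - 2, 6 * (k : ℝ) + 5]).mulVec v
    w 0 * w 1 < 0 ∧ 7 * |w 0| / 3 ≤ |w 1| ∧ |w 1| ≤ 3 * |w 0| := by
  intro w
  obtain ⟨σ, hσ, h0, h1⟩ := exists_eq_mul_abs_of_mul_pos hv
  have hv0 : 0 < |v 0| := abs_pos.mpr (left_ne_zero_of_mul hv.ne')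
  have hle : |v 0| ≤ |v 1| := by linarith
  have hk : (-1 / 4 : ℝ) ≤ k := by linarith [Nat.cast_nonneg (α := ℝ) k]
  set a := |v 0|
  set b := |v 1|
  have hw : w = ((-1 : ℝ) ^ k * σ) • ![(2 * (k : ℝ) + 1) * a - (2 * k + 2) * b,
      (6 * (k : ℝ) + 5) * b - (6 * k + 2) * a] := by
    ext i
    fin_cases i <;> simp [w, h0, h1] <;> ring
  change w ∈ coneC₄
  rw [hw]
  exact smul_mem_coneC₄ (mul_ne_zero (pow_ne_zero _ (by norm_num)) hσ)
    (mem_coneC₄_of_le hk hv0 hle)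

/-- For every `k ≥ 1`, the matrix `M₄M₃ᵏ = (-1)ᵏ[[2k+1,-2k-2],[-6k-2,6k+5]]`
maps the cone `C₁ = {v : v₁v₂ > 0, 7|v₁|/3 ≤ |v₂| ≤ 3|v₁|}` into the cone
`C₄ = {w : w₁w₂ < 0, 7|w₁|/3 ≤ |w₂| ≤ 3|w₁|}`. -/
theorem stmt6 (k : ℕ) (hk : 1 ≤ k) (v : Fin 2 → ℝ)
    (hv : v 0 * v 1 > 0) (hlo : 7 * |v 0| / 3 ≤ |v 1|) (hhi : |v 1| ≤ 3 * |v 0|) :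
    let w := (((-1 : ℝ) ^ k) •
      !![2 * (k : ℝ) + 1, -2 * (k : ℝ) - 2;
         -6 * (k : ℝ) - 2, 6 * (k : ℝ) + 5]).mulVec v
    w 0 * w 1 < 0 ∧ 7 * |w 0| / 3 ≤ |w 1| ∧ |w 1| ≤ 3 * |w 0| :=
  stmt6_general k v hv hlo
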